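/- For every fixed β ∈ (0,∞), as α → 1 (with α ∈ (0,1)∪(1,∞)) the two-parameter Rényi conditional entropy converges to the Shannon conditional entropy: lim_{α→1} H̃_{α,β}(X|Y) = H(X|Y) := −Σ_{(x,y): P_XY(x,y)>0} P_XY(x,y) · log P_{X|Y}(x|y). -/

import Mathlib

open scoped BigOperators

noncomputable section

variable {𝓧 𝓨 : Type*} [Fintype 𝓧] [Fintype 𝓨]

/-- Marginal distribution of the second component. -/
def pY (P : 𝓧 × 𝓨 → ℝ) (y : 𝓨) : ℝ := ∑ x, P (x, y)

/-- Conditional distribution `P_{X|Y}(x|y)`. -/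
def pCond (P : 𝓧 × 𝓨 → ℝ) (x : 𝓧) (y : 𝓨) : ℝ := P (x, y) / pY P y

/-- Two-parameter Rényi conditional entropy `H̃_{α,β}(X|Y)`. -/
def Htilde (P : 𝓧 × 𝓨 → ℝ) (α β : ℝ) : ℝ :=
  α / (β * (1 - α)) *
    Real.logb 2 (∑ y, if 0 < pY P y then
      pY P y * (∑ x, pCond P x y ^ α) ^ (β / α) else 0)


/-!
Write `F(α) = ∑_y P_Y(y) (∑_x P_{X|Y}(x|y)^α)^{β/α}`, so that
`H̃_{α,β}(X|Y) = α / (β (1 - α)) · log F(α)`. Since `F(1) = 1`, this is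
`-α/β` times a difference quotient of `log ∘ F` at `1`, so the limit is `-F'(1)/β`.
Differentiating under the finite sums, `F'(1) = β ∑_{x,y} P_XY(x,y) log P_{X|Y}(x|y)`.
-/

open Filter Topology Real

lemma hasDerivAt_const_rpow_of_nonneg {p x : ℝ} (hp : 0 ≤ p) (hx : x ≠ 0) :
    HasDerivAt (fun α => p ^ α) (p ^ x * log p) x := by
  rcases hp.eq_or_lt with rfl | hp
  · simp only [log_zero, mul_zero]
    refine (hasDerivAt_const x (0 : ℝ)).congr_of_eventuallyEq ?_
    filter_upwards [eventually_ne_nhds hx] with α hα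
    exact zero_rpow hα
  · exact (hasStrictDerivAt_const_rpow hp x).hasDerivAt

lemma HasDerivAt.rpow_div_self_of_eq_one {g : ℝ → ℝ} {g' : ℝ} (β : ℝ)
    (hg : HasDerivAt g g' 1) (hg1 : g 1 = 1) :
    HasDerivAt (fun α => g α ^ (β / α)) (β * g') 1 := by
  have hβα : HasDerivAt (fun α : ℝ => β / α) (-β) 1 := by
    simpa [div_eq_mul_inv] using (hasDerivAt_inv one_ne_zero).const_mul β
  refine (hg.rpow hβα (by rw [hg1]; exact one_pos)).congr_deriv ?_
  simp only [hg1, div_one, one_rpow, mul_one, log_one, mul_zero, add_zero, mul_comm]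

theorem tendsto_mul_logb_of_hasDerivAt {f : ℝ → ℝ} {D : ℝ} (c b : ℝ)
    (hf : HasDerivAt f D 1) (hf1 : f 1 = 1) :
    Tendsto (fun α => α / (c * (1 - α)) * logb b (f α)) (𝓝[≠] 1)
      (𝓝 (-(D / (c * log b)))) := by
  have hslope : Tendsto (fun α => log (f α) / (α - 1)) (𝓝[≠] 1) (𝓝 D) := by
    have hlog : HasDerivAt (fun α => log (f α)) D 1 := by
      simpa [hf1] using hf.log (by simp [hf1])
    refine hlog.tendsto_slope.congr fun α => ?_
    simp [slope_def_field, hf1]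
  have hcoef : Tendsto (fun α : ℝ => -(α / (c * log b))) (𝓝[≠] 1) (𝓝 (-(1 / (c * log b)))) :=
    ((continuous_id.div_const _).neg.tendsto 1).mono_left nhdsWithin_le_nhds
  convert hcoef.mul hslope using 2 with α
  · rw [logb, div_eq_mul_inv, div_eq_mul_inv, div_eq_mul_inv, div_eq_mul_inv, mul_inv, mul_inv,
      ← neg_sub α 1, inv_neg]
    ring
  · ring

def renyiCondSum (P : 𝓧 × 𝓨 → ℝ) (β α : ℝ) : ℝ :=
  ∑ y, if 0 < pY P y then pY P y * (∑ x, pCond P x y ^ α) ^ (β / α) else 0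

lemma Htilde_eq_renyiCondSum (P : 𝓧 × 𝓨 → ℝ) (α β : ℝ) :
    Htilde P α β = α / (β * (1 - α)) * logb 2 (renyiCondSum P β α) :=
  rfl

section

variable {P : 𝓧 × 𝓨 → ℝ}

omit [Fintype 𝓨] in
lemma pY_nonneg (hP : ∀ p, 0 ≤ P p) (y : 𝓨) : 0 ≤ pY P y :=
  Finset.sum_nonneg fun x _ => hP (x, y)

omit [Fintype 𝓨] in
lemma pCond_nonneg (hP : ∀ p, 0 ≤ P p) (x : 𝓧) (y : 𝓨) : 0 ≤ pCond P x y :=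
  div_nonneg (hP _) (pY_nonneg hP y)

lemma sum_pY : ∑ y, pY P y = ∑ p, P p :=
  (Fintype.sum_prod_type_right P).symm

omit [Fintype 𝓨] in
lemma sum_pCond {y : 𝓨} (hy : pY P y ≠ 0) : ∑ x, pCond P x y = 1 := by
  simp only [pCond, ← Finset.sum_div]
  exact div_self hy

omit [Fintype 𝓨] in
lemma pY_mul_pCond {y : 𝓨} (hy : pY P y ≠ 0) (x : 𝓧) : pY P y * pCond P x y = P (x, y) :=
  mul_div_cancel₀ _ hy

omit [Fintype 𝓨] in
lemma eq_zero_of_pY_eq_zero (hP : ∀ p, 0 ≤ P p) {y : 𝓨} (hy : pY P y = 0) (x : 𝓧) :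
    P (x, y) = 0 :=
  (Finset.sum_eq_zero_iff_of_nonneg fun x _ => hP (x, y)).mp hy x (Finset.mem_univ x)

lemma renyiCondSum_one (hP : ∀ p, 0 ≤ P p) (hPsum : ∑ p, P p = 1) (β : ℝ) :
    renyiCondSum P β 1 = 1 := by
  refine (Finset.sum_congr rfl fun y _ => ?_).trans (sum_pY.trans hPsum)
  split_ifs with hy
  · simp [sum_pCond hy.ne']
  · exact (le_antisymm (not_lt.mp hy) (pY_nonneg hP y)).symm

lemma hasDerivAt_renyiCondSum (hP : ∀ p, 0 ≤ P p) (β : ℝ) :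
    HasDerivAt (renyiCondSum P β) (β * ∑ p, P p * log (pCond P p.1 p.2)) 1 := by
  rw [Fintype.sum_prod_type_right, Finset.mul_sum]
  refine HasDerivAt.fun_sum fun y _ => ?_
  split_ifs with hy
  · have hinner : HasDerivAt (fun α : ℝ => ∑ x, pCond P x y ^ α)
        (∑ x, pCond P x y ^ (1 : ℝ) * log (pCond P x y)) 1 :=
      HasDerivAt.fun_sum fun x _ =>
        hasDerivAt_const_rpow_of_nonneg (pCond_nonneg hP x y) one_ne_zero
    refine ((hinner.rpow_div_self_of_eq_one β (by simp [sum_pCond hy.ne'])).const_mul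
      (pY P y)).congr_deriv ?_
    simp only [rpow_one, Finset.mul_sum, ← mul_assoc, mul_left_comm _ β, pY_mul_pCond hy.ne']
  · have hzero := eq_zero_of_pY_eq_zero hP (le_antisymm (not_lt.mp hy) (pY_nonneg hP y))
    simpa [hzero] using hasDerivAt_const (1 : ℝ) (0 : ℝ)

end

theorem Htilde_tendsto_shannon_general
    (P : 𝓧 × 𝓨 → ℝ) (hP : ∀ p, 0 ≤ P p) (hPsum : ∑ p, P p = 1)
    (β : ℝ) (hβ : 0 < β) :
    Filter.Tendsto (fun α => Htilde P α β)
      (nhdsWithin 1 (Set.Ioo 0 1 ∪ Set.Ioi 1))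
      (nhds (-∑ p, if 0 < P p then P p * Real.logb 2 (pCond P p.1 p.2) else 0)) := by
  have hlimit : -∑ p, (if 0 < P p then P p * logb 2 (pCond P p.1 p.2) else 0) =
      -((β * ∑ p, P p * log (pCond P p.1 p.2)) / (β * log 2)) := by
    rw [mul_div_mul_left _ _ hβ.ne', Finset.sum_div]
    congr 1
    refine Finset.sum_congr rfl fun p _ => ?_
    rcases (hP p).eq_or_lt with hp | hp
    · simp [← hp]
    · rw [if_pos hp, logb, mul_div_assoc]
  have hpunctured : 𝓝[Set.Ioo 0 1 ∪ Set.Ioi 1] (1 : ℝ) ≤ 𝓝[≠] 1 :=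
    nhdsWithin_mono _ fun α hα => hα.elim (fun h => h.2.ne) fun h => h.ne'
  simp only [Htilde_eq_renyiCondSum, hlimit]
  exact (tendsto_mul_logb_of_hasDerivAt β 2 (hasDerivAt_renyiCondSum hP β)
    (renyiCondSum_one hP hPsum β)).mono_left hpunctured

/-- for fixed `β ∈ (0,∞)`, as `α → 1` within `(0,1)∪(1,∞)`,
`H̃_{α,β}(X|Y)` converges to the Shannon conditional entropy `H(X|Y)`. -/
theorem Htilde_tendsto_shannon
    [Nonempty 𝓧] [Nonempty 𝓨]
    (P : 𝓧 × 𝓨 → ℝ) (hP : ∀ p, 0 ≤ P p) (hPsum : ∑ p, P p = 1)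
    (β : ℝ) (hβ : 0 < β) :
    Filter.Tendsto (fun α => Htilde P α β)
      (nhdsWithin 1 (Set.Ioo 0 1 ∪ Set.Ioi 1))
      (nhds (-∑ p, if 0 < P p then P p * Real.logb 2 (pCond P p.1 p.2) else 0)) :=
  Htilde_tendsto_shannon_general P hP hPsum β hβ
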